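/- For every arch system A, the generating function of the class Av(A) of arch systems avoiding A is a rational function. -/

import Mathlib

/-- Plane forests, modelling non-crossing arch systems: `node c r` is an atom
(an arch over the contents `c`) followed by the rest of the forest `r`. -/
inductive PF : Type
  | nil : PF
  | node : PF → PF → PF
  deriving DecidableEq

namespace PF

/-- number of arches (nodes) -/
def size : PF → ℕ
  | nil => 0
  | node c r => 1 + c.size + r.size

/-- concatenation of arch systems -/
def append : PF → PF → PF
  | nil, q => q
  | node c r, q => node c (r.append q)

instance : Append PF := ⟨PF.append⟩

/-- an atom: a nonempty arch system with a single outermost arch -/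
def IsAtom (a : PF) : Prop := ∃ c, a = node c nil

/-- an atom or the empty arch system -/
def AtomOrNil (a : PF) : Prop := a = nil ∨ IsAtom a

/-- One-step arch deletion: `Del X Y` means `Y` is obtained from `X` by deleting one arch
(the contents of a deleted arch are spliced in its place). -/
inductive Del : PF → PF → Prop
  | root (c r : PF) : Del (node c r) (c ++ r)
  | inside {c c' : PF} (r : PF) : Del c c' → Del (node c r) (node c' r)
  | rest {r r' : PF} (c : PF) : Del r r' → Del (node c r) (node c r')

/-- `Contains X A` : `A` is a substructure (subsystem) of `X`. -/
def Contains (X A : PF) : Prop := Relation.ReflTransGen Del X A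

/-- the class of arch systems avoiding `A` -/
def Av (A : PF) : Set PF := {X | ¬ Contains X A}

/-- Wilf-equivalence: same counting sequence by number of arches. -/
def WilfEq (A B : PF) : Prop :=
  ∀ n, Set.ncard {X | X ∈ Av A ∧ X.size = n} = Set.ncard {X | X ∈ Av B ∧ X.size = n}

/-- the generating function of `Av A`, counting by number of arches -/
noncomputable def F (A : PF) : PowerSeries ℚ :=
  PowerSeries.mk fun n => (Set.ncard {X | X ∈ Av A ∧ X.size = n} : ℚ)

end PF

/-- concatenation of a list of arch systems -/
def concatList (L : List PF) : PF := L.foldr (· ++ ·) PF.nil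

/-- The equivalence relation `∼` whose classes are cohorts: the finest equivalence
relation satisfying the four closure rules. -/
inductive Sim : PF → PF → Prop
  | refl (A : PF) : Sim A A
  | symm {A B : PF} : Sim A B → Sim B A
  | trans {A B C : PF} : Sim A B → Sim B C → Sim A C
  | arch {A B : PF} : Sim A B → Sim (PF.node A PF.nil) (PF.node B PF.nil)
  | subst {a b : PF} (P Q : PF) : PF.AtomOrNil a → PF.AtomOrNil b → Sim a b →
      Sim (P ++ a ++ Q) (P ++ b ++ Q)
  | comm {a b : PF} (P Q : PF) : PF.AtomOrNil a → PF.AtomOrNil b →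
      Sim (P ++ a ++ b ++ Q) (P ++ b ++ a ++ Q)
  | rot {a b c : PF} : PF.AtomOrNil a → PF.AtomOrNil b → PF.AtomOrNil c →
      Sim (a ++ PF.node (b ++ c) PF.nil) (PF.node (a ++ b) PF.nil ++ c)

/-- the nest of `n` nested arches -/
def nest : ℕ → PF
  | 0 => PF.nil
  | n + 1 => PF.node (nest n) PF.nil

/-- the `n`-th Motzkin number -/
def motzkin (n : ℕ) : ℕ := ∑ k ∈ Finset.range (n + 1), n.choose (2 * k) * catalan k

/-- the truncated continued fractions `C_n` of the Catalan generating function -/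
noncomputable def Cfun : ℕ → PowerSeries ℚ
  | 0 => 1
  | n + 1 => (1 - PowerSeries.X * Cfun n)⁻¹

/-- a balanced parenthesis word (Dyck word): `true` = opening, `false` = closing -/
def BalancedW (w : List Bool) : Prop :=
  w.count true = w.count false ∧ ∀ p : List Bool, p <+: w → p.count false ≤ p.count true

/-- the height of a Dyck path -/
def wheight (w : List Bool) : ℕ :=
  (w.inits.map fun p => p.count true - p.count false).foldr max 0

/-- One-step deletion of a matched pair of parentheses (an arch) in a word. -/
inductive WDel : List Bool → List Bool → Prop
  | mk (x y z : List Bool) : BalancedW y →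
      WDel (x ++ [true] ++ y ++ [false] ++ z) (x ++ y ++ z)

/-- `l` avoids the pattern 231 -/
def Avoids231 (l : List ℕ) : Prop := ¬ ∃ a b c : ℕ, [b, c, a].Sublist l ∧ a < b ∧ b < c

/-- `p` and `s` are order-isomorphic sequences -/
def OrdIso (p s : List ℕ) : Prop :=
  p.length = s.length ∧ ∀ i j : ℕ, i < p.length → j < p.length →
    (p.getD i 0 < p.getD j 0 ↔ s.getD i 0 < s.getD j 0)

/-!
Write an arch system as `node c r`: an outer arch over `c`, followed by `r`. It contains a
pattern `B` iff, for some `δ`, the `δ`-th stage of `B` lies in `c` and the arches `B.drop δ`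
lie in `r`; taking `δ` maximal makes this decomposition unique, and yields
`F B = 1 + X ∑ δ, (F (B.stage (δ + 1)) - F (B.stage δ)) F (B.drop δ)`.
All patterns on the right other than `B` itself are smaller than `B`, and `F B` occurs in it only
linearly, with a coefficient divisible by `X`. So, by induction on the size of `B`, the equation
can be solved for `F B` in the ring of rational power series.
-/

namespace PowerSeries

variable {K : Type*} [Field K]

variable (K) in
def rational : Subring (PowerSeries K) where
  carrier := {f | ∃ p q : Polynomial K, q.coeff 0 ≠ 0 ∧ (q : PowerSeries K) * f = p}
  mul_mem' := by
    rintro f g ⟨p, q, hq, hf⟩ ⟨p', q', hq', hg⟩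
    refine ⟨p * p', q * q', by simp [Polynomial.mul_coeff_zero, hq, hq'], ?_⟩
    rw [Polynomial.coe_mul, Polynomial.coe_mul, ← hf, ← hg]
    ring
  one_mem' := ⟨1, 1, by simp, by simp⟩
  add_mem' := by
    rintro f g ⟨p, q, hq, hf⟩ ⟨p', q', hq', hg⟩
    refine ⟨p * q' + p' * q, q * q', by simp [Polynomial.mul_coeff_zero, hq, hq'], ?_⟩
    simp only [Polynomial.coe_add, Polynomial.coe_mul, ← hf, ← hg]
    ring
  zero_mem' := ⟨0, 1, by simp, by simp⟩
  neg_mem' := by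
    rintro f ⟨p, q, hq, hf⟩
    exact ⟨-p, q, hq, by rw [Polynomial.coe_neg, mul_neg, hf]⟩

theorem coe_mem_rational (p : Polynomial K) : (p : PowerSeries K) ∈ rational K :=
  ⟨p, 1, by simp, by simp⟩

theorem X_mem_rational : (X : PowerSeries K) ∈ rational K := by
  simpa using coe_mem_rational (Polynomial.X : Polynomial K)

theorem inv_mem_rational {f : PowerSeries K} (hf : f ∈ rational K) (h : constantCoeff f ≠ 0) :
    f⁻¹ ∈ rational K := by
  obtain ⟨p, q, hq, hqf⟩ := hf
  have hp : constantCoeff (p : PowerSeries K) ≠ 0 := by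
    rw [← hqf, map_mul, Polynomial.constantCoeff_coe]
    exact mul_ne_zero hq h
  refine ⟨q, p, by rwa [Polynomial.constantCoeff_coe] at hp, ?_⟩
  rw [← hqf, mul_assoc, PowerSeries.mul_inv_cancel f h, mul_one]

theorem mem_rational_of_eq_add_X_mul {f a b : PowerSeries K} (ha : a ∈ rational K)
    (hb : b ∈ rational K) (h : f = a + X * b * f) : f ∈ rational K := by
  have hunit : constantCoeff (1 - X * b) ≠ 0 := by simp
  have hf : f = (1 - X * b)⁻¹ * a := by
    calc f = (1 - X * b)⁻¹ * (1 - X * b) * f := by rw [PowerSeries.inv_mul_cancel _ hunit, one_mul]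
      _ = (1 - X * b)⁻¹ * a := by rw [mul_assoc]; congr 1; linear_combination h
  rw [hf]
  exact mul_mem (inv_mem_rational (sub_mem (one_mem _) (mul_mem X_mem_rational hb)) hunit) ha

end PowerSeries

namespace PF

@[simp] theorem nil_append (X : PF) : nil ++ X = X := rfl

@[simp] theorem node_append (c r X : PF) : node c r ++ X = node c (r ++ X) := rfl

@[simp] theorem append_nil : ∀ X : PF, X ++ nil = X
  | nil => rfl
  | node c r => by simp [append_nil r]

theorem append_assoc : ∀ X Y Z : PF, X ++ Y ++ Z = X ++ (Y ++ Z)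
  | nil, _, _ => rfl
  | node _ r, Y, Z => by simp [append_assoc r Y Z]

@[simp] theorem size_nil : nil.size = 0 := rfl

@[simp] theorem size_node (c r : PF) : (node c r).size = 1 + c.size + r.size := rfl

@[simp] theorem size_append : ∀ X Y : PF, (X ++ Y).size = X.size + Y.size
  | nil, _ => by simp
  | node c r, Y => by simp [size_append r Y]; omega

/-- An inductive description of containment: `Minor A X` holds if the first outer arch of `X`
is either kept, as the first outer arch of `A`, or deleted. -/
inductive Minor : PF → PF → Prop
  | nil (X : PF) : Minor nil X
  | node {a₁ a₂ c r : PF} : Minor a₁ c → Minor a₂ r → Minor (node a₁ a₂) (node c r)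
  | skip {A c r : PF} : Minor A (c ++ r) → Minor A (node c r)

namespace Minor

protected theorem refl : ∀ X : PF, Minor X X
  | .nil => .nil _
  | .node c r => .node (Minor.refl c) (Minor.refl r)

theorem append_left {A Z : PF} (h : Minor A Z) : ∀ Y : PF, Minor A (Y ++ Z)
  | .nil => h
  | .node c r => .skip (append_left (append_left h r) c)

theorem append {A₁ A₂ X₁ X₂ : PF} (h₁ : Minor A₁ X₁) (h₂ : Minor A₂ X₂) :
    Minor (A₁ ++ A₂) (X₁ ++ X₂) := by
  induction h₁ with
  | nil X => exact h₂.append_left X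
  | node h _ _ ih => exact .node h ih
  | skip _ ih => exact .skip (by rw [append_assoc] at ih; exact ih)

theorem of_append : ∀ {X₁ X₂ A : PF}, Minor A (X₁ ++ X₂) →
    ∃ A₁ A₂, A = A₁ ++ A₂ ∧ Minor A₁ X₁ ∧ Minor A₂ X₂
  | .nil, _, A, h => ⟨.nil, A, rfl, .nil _, h⟩
  | .node c r, X₂, _, h => by
    change Minor _ (.node c (r ++ X₂)) at h
    cases h with
    | nil => exact ⟨.nil, .nil, rfl, .nil _, .nil _⟩
    | node h₁ h₂ =>
      obtain ⟨A₁, A₂, rfl, hA₁, hA₂⟩ := of_append h₂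
      exact ⟨.node _ A₁, A₂, rfl, .node h₁ hA₁, hA₂⟩
    | skip h =>
      rw [← append_assoc] at h
      obtain ⟨A₁, A₂, rfl, hA₁, hA₂⟩ := of_append (X₁ := c ++ r) h
      exact ⟨A₁, A₂, rfl, .skip hA₁, hA₂⟩
termination_by X₁ => X₁.size
decreasing_by all_goals (simp; try omega)

protected theorem trans {A B C : PF} (hAB : Minor A B) (hBC : Minor B C) : Minor A C := by
  induction hBC generalizing A with
  | nil X => cases hAB; exact .nil X
  | node _ _ ih₁ ih₂ =>
    cases hAB with
    | nil => exact .nil _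
    | node h₁ h₂ => exact .node (ih₁ h₁) (ih₂ h₂)
    | skip h =>
      obtain ⟨A₁, A₂, rfl, h₁, h₂⟩ := of_append h
      exact .skip ((ih₁ h₁).append (ih₂ h₂))
  | skip _ ih => exact .skip (ih hAB)

end Minor

instance : Preorder PF where
  le := Minor
  le_refl := Minor.refl
  le_trans _ _ _ := Minor.trans

theorem nil_le (X : PF) : nil ≤ X := Minor.nil X

theorem node_le_node {a₁ a₂ c r : PF} (h₁ : a₁ ≤ c) (h₂ : a₂ ≤ r) : node a₁ a₂ ≤ node c r :=
  Minor.node h₁ h₂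

theorem le_node_of_le_append {A c r : PF} (h : A ≤ c ++ r) : A ≤ node c r := Minor.skip h

theorem append_le_append {A₁ A₂ X₁ X₂ : PF} (h₁ : A₁ ≤ X₁) (h₂ : A₂ ≤ X₂) :
    A₁ ++ A₂ ≤ X₁ ++ X₂ :=
  Minor.append h₁ h₂

theorem le_append_right (X Y : PF) : X ≤ X ++ Y := by
  simpa using append_le_append le_rfl (nil_le Y)

theorem le_append_left (X Y : PF) : Y ≤ X ++ Y := Minor.append_left (Minor.refl Y) X

theorem eq_or_size_lt_of_le {A X : PF} (h : A ≤ X) : A = X ∨ A.size < X.size := by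
  induction h with
  | nil X => cases X <;> simp
  | node _ _ ih₁ ih₂ =>
    rcases ih₁ with rfl | h₁ <;> rcases ih₂ with rfl | h₂ <;> simp <;> omega
  | skip _ ih =>
    right
    rcases ih with rfl | h <;> simp only [size_append, size_node] at * <;> omega

theorem size_le_of_le {A X : PF} (h : A ≤ X) : A.size ≤ X.size := by
  rcases eq_or_size_lt_of_le h with rfl | h <;> omega

theorem le_of_del {X Y : PF} (h : Del X Y) : Y ≤ X := by
  induction h with
  | root c r => exact le_node_of_le_append le_rfl
  | inside r _ ih => exact node_le_node ih le_rfl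
  | rest c _ ih => exact node_le_node le_rfl ih

theorem contains_nil : ∀ X : PF, Contains X nil
  | nil => .refl
  | node c r => .head (Del.root c r) (contains_nil (c ++ r))
termination_by X => X.size
decreasing_by simp

theorem contains_iff_le {X A : PF} : Contains X A ↔ A ≤ X := by
  constructor
  · intro h
    induction h with
    | refl => exact le_rfl
    | tail _ hd ih => exact (le_of_del hd).trans ih
  · intro h
    induction h with
    | nil X => exact contains_nil X
    | node _ _ ih₁ ih₂ =>
      exact (ih₁.lift (node · _) fun _ _ => Del.inside _).trans
        (ih₂.lift (node _ ·) fun _ _ => Del.rest _)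
    | skip _ ih => exact .head (Del.root _ _) ih

theorem mem_Av {X A : PF} : X ∈ Av A ↔ ¬ A ≤ X := not_congr contains_iff_le

theorem Av_mono : Monotone Av :=
  fun _ _ h _ hX hA' => mem_Av.1 hX (h.trans (contains_iff_le.1 hA'))

theorem Av_nil : Av nil = ∅ := Set.eq_empty_of_forall_notMem fun X h => mem_Av.1 h (nil_le X)

def length : PF → ℕ
  | nil => 0
  | node _ r => r.length + 1

def take : ℕ → PF → PF
  | 0, _ => nil
  | _ + 1, nil => nil
  | k + 1, node c r => node c (take k r)

def drop : ℕ → PF → PF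
  | 0, X => X
  | _ + 1, nil => nil
  | k + 1, node _ r => drop k r

/-- The chain `nil ≤ b₁ ≤ take 2 B ≤ take 3 B ≤ ⋯ ≤ B`, where `b₁` is the interior of the first
outer arch of `B`; how far along this chain `c` reaches decides whether `node c r` contains `B`. -/
def stage : PF → ℕ → PF
  | _, 0 => nil
  | nil, 1 => nil
  | node c _, 1 => c
  | B, k + 2 => B.take (k + 2)

@[simp] theorem length_append : ∀ X Y : PF, (X ++ Y).length = X.length + Y.length
  | nil, _ => by simp [length]
  | node _ r, Y => by simp [length, length_append r Y]; omega

theorem take_append_drop : ∀ (k : ℕ) (X : PF), X.take k ++ X.drop k = X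
  | 0, _ => rfl
  | _ + 1, nil => rfl
  | k + 1, node c r => by simp [take, drop, take_append_drop k r]

theorem take_length_append : ∀ X Y : PF, (X ++ Y).take X.length = X
  | nil, _ => rfl
  | node _ r, Y => by simp [take, length, take_length_append r Y]

theorem drop_length_append : ∀ X Y : PF, (X ++ Y).drop X.length = Y
  | nil, _ => rfl
  | node _ r, Y => by simp [drop, length, drop_length_append r Y]

theorem drop_length (X : PF) : X.drop X.length = nil := by
  simpa using drop_length_append X nil

theorem take_le (k : ℕ) (X : PF) : X.take k ≤ X := by
  simpa only [take_append_drop] using le_append_right (X.take k) (X.drop k)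

theorem take_le_take_succ : ∀ (k : ℕ) (X : PF), X.take k ≤ X.take (k + 1)
  | 0, _ => nil_le _
  | _ + 1, nil => le_rfl
  | k + 1, node _ r => node_le_node le_rfl (take_le_take_succ k r)

theorem drop_succ_le : ∀ (k : ℕ) (X : PF), X.drop (k + 1) ≤ X.drop k
  | 0, nil => le_rfl
  | _ + 1, nil => le_rfl
  | 0, node c r => le_node_of_le_append (le_append_left c r)
  | k + 1, node _ r => drop_succ_le k r

theorem drop_antitone (X : PF) : Antitone (X.drop ·) :=
  antitone_nat_of_succ_le fun k => drop_succ_le k X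

theorem stage_le_take : ∀ (X : PF) (k : ℕ), X.stage k ≤ X.take k
  | _, 0 => le_rfl
  | nil, 1 => le_rfl
  | node c r, 1 => le_node_of_le_append (le_append_right c (take 0 r))
  | _, _ + 2 => le_rfl

theorem stage_monotone (X : PF) : Monotone X.stage := by
  refine monotone_nat_of_le_succ fun k => ?_
  match k with
  | 0 => exact nil_le _
  | 1 => exact (stage_le_take X 1).trans (take_le_take_succ 1 X)
  | k + 2 => exact take_le_take_succ (k + 2) X

theorem stage_le (X : PF) (k : ℕ) : X.stage k ≤ X := (stage_le_take X k).trans (take_le k X)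

theorem size_drop_succ_lt {X : PF} (hX : X ≠ nil) (k : ℕ) : (X.drop (k + 1)).size < X.size := by
  cases X with
  | nil => exact absurd rfl hX
  | node c r =>
    have : (r.drop k).size ≤ r.size := size_le_of_le (drop_antitone r k.zero_le)
    simp [drop]; omega

theorem size_stage_one_lt {B : PF} (hB : B ≠ nil) : (B.stage 1).size < B.size := by
  cases B with
  | nil => exact absurd rfl hB
  | node c r => simp [stage]; omega

/-- Deleting arches from `node c r` either keeps its first arch, matched with the first arch
of `B` (the case `δ = 1`), or splits `B` into a prefix inside `c` and a suffix inside `r`. -/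
theorem le_node_iff {B c r : PF} :
    B ≤ node c r ↔ ∃ δ ≤ B.length, B.stage δ ≤ c ∧ B.drop δ ≤ r := by
  constructor
  · intro h
    cases h with
    | nil => exact ⟨0, Nat.zero_le _, nil_le c, nil_le r⟩
    | node h₁ h₂ => exact ⟨1, by simp [length], h₁, h₂⟩
    | skip h =>
      obtain ⟨B₁, B₂, rfl, h₁, h₂⟩ := Minor.of_append h
      refine ⟨B₁.length, by simp, ?_, by rwa [drop_length_append]⟩
      exact (stage_le_take _ _).trans (by rwa [take_length_append])
  · rintro ⟨δ, hδ, h₁, h₂⟩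
    match δ, B with
    | 0, B => exact le_node_of_le_append ((le_append_left c r).trans' h₂)
    | 1, nil => exact nil_le _
    | 1, node b₁ b₂ => exact node_le_node h₁ h₂
    | k + 2, B =>
      rw [← take_append_drop (k + 2) B]
      exact le_node_of_le_append (append_le_append h₁ h₂)

theorem finite_setOf_size_le : ∀ n : ℕ, {X : PF | X.size ≤ n}.Finite
  | 0 => (Set.finite_singleton nil).subset fun X hX => by cases X <;> simp_all
  | n + 1 => by
    refine (((finite_setOf_size_le n).image2 node (finite_setOf_size_le n)).insert nil).subset ?_
    rintro (_ | ⟨c, r⟩) h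
    · exact Set.mem_insert _ _
    · replace h : 1 + c.size + r.size ≤ n + 1 := h
      exact Set.mem_insert_of_mem _ (Set.mem_image2_of_mem (by simp; omega) (by simp; omega))

def level (S : Set PF) (n : ℕ) : Set PF := {X | X ∈ S ∧ X.size = n}

theorem finite_level (S : Set PF) (n : ℕ) : (level S n).Finite :=
  (finite_setOf_size_le n).subset fun _ hX => hX.2.le

noncomputable def gf (S : Set PF) : PowerSeries ℚ := PowerSeries.mk fun n => ((level S n).ncard : ℚ)

theorem F_eq_gf (A : PF) : F A = gf (Av A) := rfl

theorem gf_empty : gf ∅ = 0 := by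
  ext n
  simp [gf, level]

theorem gf_singleton_nil : gf {nil} = 1 := by
  ext n
  rcases n with _ | n
  · have : level {nil} 0 = {nil} := by ext X; cases X <;> simp [level]
    simp [gf, this]
  · have : level {nil} (n + 1) = ∅ := by ext X; simp only [level]; aesop
    simp [gf, this, PowerSeries.coeff_one]

theorem gf_union {S T : Set PF} (h : Disjoint S T) : gf (S ∪ T) = gf S + gf T := by
  ext n
  have : level (S ∪ T) n = level S n ∪ level T n := by ext X; simp [level, or_and_right]
  simp only [gf, PowerSeries.coeff_mk, map_add, this]
  rw [Set.ncard_union_eq (h.mono (fun _ hX => hX.1) (fun _ hX => hX.1)) (finite_level S n)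
    (finite_level T n), Nat.cast_add]

theorem gf_diff {S T : Set PF} (h : T ⊆ S) : gf (S \ T) = gf S - gf T := by
  rw [eq_sub_iff_add_eq, ← gf_union Set.disjoint_sdiff_left, Set.sdiff_union_of_subset h]

theorem gf_biUnion {ι : Type*} (s : Finset ι) (S : ι → Set PF)
    (h : (s : Set ι).PairwiseDisjoint S) : gf (⋃ i ∈ s, S i) = ∑ i ∈ s, gf (S i) := by
  ext n
  have : level (⋃ i ∈ s, S i) n = ⋃ i ∈ (s : Set ι), level (S i) n := by
    ext X; simp only [level]; aesop
  simp only [gf, PowerSeries.coeff_mk, map_sum, this]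
  rw [Set.Finite.ncard_biUnion s.finite_toSet (fun i _ => finite_level (S i) n)
    (h.mono fun i _ hX => hX.1), finsum_mem_coe_finset, Nat.cast_sum]

open Finset in
theorem gf_image2_node (S T : Set PF) :
    gf (Set.image2 node S T) = PowerSeries.X * (gf S * gf T) := by
  ext n
  rcases n with _ | n
  · have : level (Set.image2 node S T) 0 = ∅ := by
      ext X; simp only [level, Set.mem_image2]; aesop
    simp [gf, this]
  have hlevel : level (Set.image2 node S T) (n + 1) =
      ⋃ p ∈ (antidiagonal n : Set (ℕ × ℕ)), Set.image2 node (level S p.1) (level T p.2) := by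
    ext X
    simp only [level, Set.mem_image2, Set.mem_iUnion, Set.mem_ofPred_eq, Finset.mem_coe,
      Finset.HasAntidiagonal.mem_antidiagonal, exists_prop]
    constructor
    · rintro ⟨⟨c, hc, r, hr, rfl⟩, hsize⟩
      exact ⟨(c.size, r.size), by simp at hsize ⊢; omega, c, ⟨hc, rfl⟩, r, ⟨hr, rfl⟩, rfl⟩
    · rintro ⟨p, hp, c, ⟨hc, hcs⟩, r, ⟨hr, hrs⟩, rfl⟩
      exact ⟨⟨c, hc, r, hr, rfl⟩, by simp; omega⟩
  have hdisj : (antidiagonal n : Set (ℕ × ℕ)).PairwiseDisjoint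
      fun p => Set.image2 node (level S p.1) (level T p.2) := by
    rintro p - q - hpq
    refine Set.disjoint_left.2 ?_
    rintro _ ⟨c, ⟨-, hc⟩, r, ⟨-, hr⟩, rfl⟩ ⟨c', ⟨-, hc'⟩, r', ⟨-, hr'⟩, h⟩
    obtain ⟨rfl, rfl⟩ := node.inj h
    exact hpq (Prod.ext (hc.symm.trans hc') (hr.symm.trans hr'))
  have hcard (p : ℕ × ℕ) : (Set.image2 node (level S p.1) (level T p.2)).ncard =
      (level S p.1).ncard * (level T p.2).ncard := by
    have hinj : (Function.uncurry node).Injective := fun x y h =>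
      Prod.ext (node.inj h).1 (node.inj h).2
    rw [← Set.image_uncurry_prod, Set.ncard_image_of_injective _ hinj, Set.ncard_prod]
  rw [PowerSeries.coeff_succ_X_mul, PowerSeries.coeff_mul]
  simp only [gf, PowerSeries.coeff_mk, hlevel]
  rw [Set.Finite.ncard_biUnion (antidiagonal n).finite_toSet
    (fun p _ => (finite_level S p.1).image2 node (finite_level T p.2)) hdisj,
    finsum_mem_coe_finset, Nat.cast_sum]
  simp [hcard]

theorem mem_Av_node_iff {B c r : PF} : node c r ∈ Av B ↔
    ∃ δ < B.length, c ∈ Av (B.stage (δ + 1)) \ Av (B.stage δ) ∧ r ∈ Av (B.drop δ) := by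
  simp only [Set.mem_sdiff, mem_Av, not_not, le_node_iff, not_exists, not_and]
  constructor
  · intro h
    classical
    set δ := Nat.findGreatest (B.stage · ≤ c) B.length
    have hδ : B.stage δ ≤ c :=
      Nat.findGreatest_spec (P := (B.stage · ≤ c)) (Nat.zero_le _) (nil_le c)
    have hδlt : δ < B.length := by
      refine (Nat.findGreatest_le _).lt_of_ne fun hlen => ?_
      have hlen : δ = B.length := hlen
      exact h δ hlen.le hδ (by rw [hlen, drop_length]; exact nil_le r)
    exact ⟨δ, hδlt, ⟨Nat.findGreatest_is_greatest (Nat.lt_succ_self δ) hδlt, hδ⟩,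
      h δ hδlt.le hδ⟩
  · rintro ⟨δ, -, ⟨hnext, hδ⟩, hr⟩ δ' - hδ' hr'
    rcases le_or_gt δ' δ with hle | hlt
    · exact hr ((drop_antitone B hle).trans hr')
    · exact hnext ((stage_monotone B hlt).trans hδ')

theorem Av_eq {B : PF} (hB : B ≠ nil) :
    Av B = insert nil (⋃ δ ∈ Finset.range B.length,
      Set.image2 node (Av (B.stage (δ + 1)) \ Av (B.stage δ)) (Av (B.drop δ))) := by
  ext (_ | ⟨c, r⟩)
  · simpa [mem_Av] using fun h => hB ((eq_or_size_lt_of_le h).resolve_right (by simp))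
  · simp only [mem_Av_node_iff, Set.mem_insert_iff, reduceCtorEq, false_or, Set.mem_iUnion,
      Set.mem_image2, Finset.mem_range, exists_prop, node.injEq]
    constructor
    · rintro ⟨δ, hδ, hc, hr⟩
      exact ⟨δ, hδ, c, hc, r, hr, rfl, rfl⟩
    · rintro ⟨δ, hδ, c, hc, r, hr, rfl, rfl⟩
      exact ⟨δ, hδ, hc, hr⟩

theorem F_nil : F nil = 0 := by
  rw [F_eq_gf, Av_nil, gf_empty]

theorem F_eq {B : PF} (hB : B ≠ nil) :
    F B = 1 + PowerSeries.X * ∑ δ ∈ Finset.range B.length,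
      (F (B.stage (δ + 1)) - F (B.stage δ)) * F (B.drop δ) := by
  have hdisj : (Finset.range B.length : Set ℕ).PairwiseDisjoint fun δ =>
      Set.image2 node (Av (B.stage (δ + 1)) \ Av (B.stage δ)) (Av (B.drop δ)) := by
    rintro δ - δ' - hne
    refine Set.disjoint_left.2 ?_
    rintro _ ⟨c, ⟨hnext, hδ⟩, r, -, rfl⟩ ⟨c', ⟨hnext', hδ'⟩, r', -, h⟩
    obtain ⟨rfl, rfl⟩ := node.inj h
    rw [mem_Av, not_not] at hδ hδ'
    rcases hne.lt_or_gt with hlt | hlt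
    · exact mem_Av.1 hnext ((stage_monotone B hlt).trans hδ')
    · exact mem_Av.1 hnext' ((stage_monotone B hlt).trans hδ)
  have hnil : Disjoint {nil} (⋃ δ ∈ Finset.range B.length,
      Set.image2 node (Av (B.stage (δ + 1)) \ Av (B.stage δ)) (Av (B.drop δ))) := by
    simp [Set.mem_image2]
  rw [F_eq_gf, Av_eq hB, Set.insert_eq, gf_union hnil, gf_singleton_nil, gf_biUnion _ _ hdisj,
    Finset.mul_sum]
  refine congrArg _ (Finset.sum_congr rfl fun δ _ => ?_)
  rw [gf_image2_node, gf_diff (Av_mono (stage_monotone B δ.le_succ))]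
  rfl

/-- Only the term `δ = 0` of `F_eq` (where `B.drop 0 = B`) and the term with
`B.stage (δ + 1) = B` involve `F B`, so the sum lies in the span of `1` and `F B`. -/
theorem F_mem_rational_of_lt {B : PF} (hB : B ≠ nil)
    (ih : ∀ A : PF, A.size < B.size → F A ∈ PowerSeries.rational ℚ) :
    F B ∈ PowerSeries.rational ℚ := by
  set R := PowerSeries.rational ℚ
  set M := Submodule.span R {1, F B}
  have hmul {f g : PowerSeries ℚ} (hf : f ∈ R) (hg : g ∈ M) : f * g ∈ M := by
    simpa [Subring.smul_def] using M.smul_mem ⟨f, hf⟩ hg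
  have hstage (k : ℕ) : F (B.stage k) ∈ M := by
    rcases eq_or_size_lt_of_le (stage_le B k) with h | h
    · exact Submodule.subset_span (by simp [h])
    · simpa using hmul (ih _ h) (Submodule.subset_span (by simp) : (1 : PowerSeries ℚ) ∈ M)
  have hsum : ∑ δ ∈ Finset.range B.length,
      (F (B.stage (δ + 1)) - F (B.stage δ)) * F (B.drop δ) ∈ M := by
    refine Submodule.sum_mem M fun δ _ => ?_
    rcases δ with _ | δ
    · have : F (B.stage 1) - F (B.stage 0) ∈ R :=
        sub_mem (ih _ (size_stage_one_lt hB)) (by simp [stage, F_nil])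
      exact hmul this (Submodule.subset_span (by simp [drop]))
    · rw [mul_comm]
      exact hmul (ih _ (size_drop_succ_lt hB δ)) (M.sub_mem (hstage _) (hstage _))
  obtain ⟨a, b, hab⟩ := Submodule.mem_span_pair.1 hsum
  have hF := F_eq hB
  rw [← hab, Subring.smul_def, Subring.smul_def, smul_eq_mul, smul_eq_mul, mul_one] at hF
  exact PowerSeries.mem_rational_of_eq_add_X_mul
    (add_mem (one_mem R) (mul_mem PowerSeries.X_mem_rational a.2)) b.2
    (by linear_combination hF)

theorem F_mem_rational (B : PF) : F B ∈ PowerSeries.rational ℚ := by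
  induction B using (measure size).wf.induction with
  | h B ih =>
    rcases eq_or_ne B nil with rfl | hB
    · simp [F_nil]
    · exact F_mem_rational_of_lt hB ih

end PF

/-- The generating function of `Av(A)` is a rational function. -/
theorem F_rational (A : PF) :
    ∃ p q : Polynomial ℚ, q.coeff 0 ≠ 0 ∧
      (q : PowerSeries ℚ) * PF.F A = (p : PowerSeries ℚ) :=
  PF.F_mem_rational A
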